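/- (Proposition 3, intercept-only case) In the Gaussian model with a global random intercept and cluster-specific Gaussian spatial random effects and no covariates, for any two indices i ≠ j the marginal correlation of the responses is Corr(y_i, y_j) = (τ² + Σ_{h=1}^{k} λ_h² (H_h)_{ij} P(c_i = c_j = h)) / (√(σ² + τ² + Σ_{h=1}^{k} λ_h² P(c_i = h)) · √(σ² + τ² + Σ_{h=1}^{k} λ_h² P(c_j = h))). -/

import Mathlib

open MeasureTheory ProbabilityTheory
open scoped NNReal ENNReal

/-! Expanding the covariance bilinearly, independence kills every cross term between the
intercept, the spatial effects and the noise, so `Cov(yᵢ, yⱼ) = Var β + Cov(θᵢ, θⱼ) + Cov(εᵢ, εⱼ)`.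
By the tower property, the conditional moments given the labels yield `E θᵢ = 0` and
`E[θᵢ θⱼ] = ∑ₕ λₕ² (Hₕ)ᵢⱼ P(cᵢ = cⱼ = h)`; the noise contributes `σ²` on the diagonal only, where
`(Hₕ)ᵢᵢ = 1` turns the spatial term into `∑ₕ λₕ² P(cᵢ = h)`. -/

noncomputable def cov {Ω : Type*} [MeasurableSpace Ω] (P : Measure Ω) (f g : Ω → ℝ) : ℝ :=
  (∫ ω, f ω * g ω ∂P) - (∫ ω, f ω ∂P) * (∫ ω, g ω ∂P)

noncomputable def var {Ω : Type*} [MeasurableSpace Ω] (P : Measure Ω) (f : Ω → ℝ) : ℝ :=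
  cov P f f

noncomputable def corr {Ω : Type*} [MeasurableSpace Ω] (P : Measure Ω) (f g : Ω → ℝ) : ℝ :=
  cov P f g / (Real.sqrt (var P f) * Real.sqrt (var P g))

section

variable {Ω : Type*} {m₀ : MeasurableSpace Ω} {P : Measure Ω}

lemma cov_eq_covariance [IsProbabilityMeasure P] {f g : Ω → ℝ} (hf : MemLp f 2 P)
    (hg : MemLp g 2 P) : cov P f g = cov[f, g; P] :=
  (covariance_eq_sub hf hg).symm

lemma corr_eq_covariance [IsProbabilityMeasure P] {f g : Ω → ℝ} (hf : MemLp f 2 P)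
    (hg : MemLp g 2 P) : corr P f g = cov[f, g; P] / (√cov[f, f; P] * √cov[g, g; P]) := by
  rw [corr, var, var, cov_eq_covariance hf hg, cov_eq_covariance hf hf, cov_eq_covariance hg hg]

lemma ProbabilityTheory.HasLaw.memLp_of_gaussianReal {X : Ω → ℝ} {m : ℝ} {v : ℝ≥0}
    (hX : HasLaw X (gaussianReal m v) P) {p : ℝ≥0∞} (hp : p ≠ ∞) : MemLp X p P := by
  have h := memLp_id_gaussianReal' (μ := m) (v := v) p hp
  rwa [← hX.map_eq, memLp_map_measure_iff (by fun_prop) hX.aemeasurable] at h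

lemma ProbabilityTheory.HasLaw.variance_eq_of_gaussianReal {X : Ω → ℝ} {m : ℝ} {v : ℝ≥0}
    (hX : HasLaw X (gaussianReal m v) P) : Var[X; P] = v := by
  rw [hX.variance_eq, variance_id_gaussianReal]

lemma integral_eq_of_condExp_ae_eq {m : MeasurableSpace Ω} [IsFiniteMeasure P]
    (hm : m ≤ m₀) {f g : Ω → ℝ} (h : P[f | m] =ᵐ[P] g) : ∫ ω, f ω ∂P = ∫ ω, g ω ∂P := by
  rw [← integral_condExp hm, integral_congr_ae h]

lemma integral_sum_mul_ite_eq [IsFiniteMeasure P] {ι : Type*} (s : Finset ι) (a : ι → ℝ)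
    (p : ι → Ω → Prop) [∀ h ω, Decidable (p h ω)] (hp : ∀ h, MeasurableSet {ω | p h ω}) :
    ∫ ω, ∑ h ∈ s, a h * (if p h ω then 1 else 0) ∂P = ∑ h ∈ s, a h * P.real {ω | p h ω} := by
  have hite : ∀ h ω, (if p h ω then (1 : ℝ) else 0) = {ω | p h ω}.indicator (fun _ => 1) ω := by
    intro h ω
    simp [Set.indicator_apply]
  simp only [hite]
  rw [integral_finsetSum _ fun h _ => ((integrable_const (1 : ℝ)).indicator (hp h)).const_mul (a h)]
  simp only [integral_const_mul, integral_indicator_const _ (hp _), smul_eq_mul, mul_one]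

lemma covariance_eq_integral_of_condExp_eq_zero [IsProbabilityMeasure P]
    {m : MeasurableSpace Ω} (hm : m ≤ m₀) {X Y g : Ω → ℝ} (hX : MemLp X 2 P) (hY : MemLp Y 2 P)
    (hX₀ : P[X | m] =ᵐ[P] 0) (hXY : P[fun ω => X ω * Y ω | m] =ᵐ[P] g) :
    cov[X, Y; P] = ∫ ω, g ω ∂P := by
  rw [covariance_eq_sub hX hY, integral_eq_of_condExp_ae_eq hm hX₀]
  simpa using integral_eq_of_condExp_ae_eq hm hXY

lemma covariance_add_add_of_uncorrelated [IsFiniteMeasure P] {B T₁ T₂ E₁ E₂ : Ω → ℝ}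
    (hB : MemLp B 2 P) (hT₁ : MemLp T₁ 2 P) (hT₂ : MemLp T₂ 2 P) (hE₁ : MemLp E₁ 2 P)
    (hE₂ : MemLp E₂ 2 P) (hBT₁ : cov[B, T₁; P] = 0) (hBT₂ : cov[B, T₂; P] = 0)
    (hBE₁ : cov[B, E₁; P] = 0) (hBE₂ : cov[B, E₂; P] = 0) (hE₁T₂ : cov[E₁, T₂; P] = 0)
    (hE₂T₁ : cov[E₂, T₁; P] = 0) :
    cov[B + T₁ + E₁, B + T₂ + E₂; P] = Var[B; P] + cov[T₁, T₂; P] + cov[E₁, E₂; P] := by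
  have expand_right {X : Ω → ℝ} (hX : MemLp X 2 P) :
      cov[X, B + T₂ + E₂; P] = cov[X, B; P] + cov[X, T₂; P] + cov[X, E₂; P] := by
    rw [covariance_add_right hX (hB.add hT₂) hE₂, covariance_add_right hX hB hT₂]
  rw [covariance_add_left (hB.add hT₁) hE₁ ((hB.add hT₂).add hE₂),
    covariance_add_left hB hT₁ ((hB.add hT₂).add hE₂), expand_right hB, expand_right hT₁,
    expand_right hE₁, covariance_comm T₁ B, covariance_comm E₁ B, covariance_comm T₁ E₂,
    covariance_self hB.aemeasurable, hBT₁, hBT₂, hBE₁, hBE₂, hE₁T₂, hE₂T₁]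
  ring

end

theorem correlation_global_intercept_local_spatial_general
    {Ω : Type*} [MeasurableSpace Ω] (P : Measure Ω) [IsProbabilityMeasure P]
    (n k : ℕ)
    -- random cluster labels
    (c : Fin n → Ω → Fin k) (hc : ∀ i, Measurable (c i))
    -- global random intercept β ~ N(μ, τ²)
    (β : Ω → ℝ) (hβ : Measurable β)
    -- Gaussian errors
    (ε : Fin n → Ω → ℝ) (hε : ∀ i, Measurable (ε i))
    -- cluster-specific spatial random effects
    (θ : Fin n → Ω → ℝ)
    (μv τ : ℝ) (σ : ℝ)
    (lam : Fin k → ℝ)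
    (H : Fin k → Matrix (Fin n) (Fin n) ℝ)
    (hHdiag : ∀ h i, H h i i = 1)
    (hβgauss : Measure.map β P = gaussianReal μv (Real.toNNReal (τ ^ 2)))
    -- the ε's are i.i.d. N(0, σ²)
    (hεindep : iIndepFun ε P)
    (hεgauss : ∀ i, Measure.map (ε i) P = gaussianReal 0 (Real.toNNReal (σ ^ 2)))
    -- the θ's are square integrable with the prescribed conditional moments given the labels
    (hθL2 : ∀ i, MemLp (θ i) 2 P)
    (hθcond1 : ∀ i, P[θ i |
      MeasurableSpace.comap (fun ω (i' : Fin n) => c i' ω) inferInstance] =ᵐ[P] 0)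
    (hθcond2 : ∀ i j, P[fun ω => θ i ω * θ j ω |
      MeasurableSpace.comap (fun ω (i' : Fin n) => c i' ω) inferInstance]
      =ᵐ[P] fun ω => ∑ h, (lam h) ^ 2 * H h i j * (if c i ω = h ∧ c j ω = h then (1 : ℝ) else 0))
    -- β is independent of (labels, θ)
    (hβind : IndepFun β (fun ω => ((fun i => c i ω, fun i => θ i ω) :
      (Fin n → Fin k) × (Fin n → ℝ))) P)
    -- the ε family is independent of (labels, θ, β)
    (hεind : IndepFun (fun ω (i : Fin n) => ε i ω)
      (fun ω => ((fun i => c i ω, fun i => θ i ω, β ω) :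
        (Fin n → Fin k) × (Fin n → ℝ) × ℝ)) P)
    -- responses
    (y : Fin n → Ω → ℝ)
    (hy : ∀ i ω, y i ω = β ω + θ i ω + ε i ω)
    (i j : Fin n) (hij : i ≠ j) :
    corr P (y i) (y j)
      = (τ ^ 2 + ∑ h, (lam h) ^ 2 * H h i j * (P {ω | c i ω = h ∧ c j ω = h}).toReal)
        / (Real.sqrt (σ ^ 2 + τ ^ 2 + ∑ h, (lam h) ^ 2 * (P {ω | c i ω = h}).toReal)
            * Real.sqrt (σ ^ 2 + τ ^ 2 + ∑ h, (lam h) ^ 2 * (P {ω | c j ω = h}).toReal)) := by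
  obtain rfl : y = fun l => β + θ l + ε l := funext fun l => funext (hy l)
  have hβlaw : HasLaw β (gaussianReal μv (τ ^ 2).toNNReal) P := ⟨hβ.aemeasurable, hβgauss⟩
  have hεlaw (l) : HasLaw (ε l) (gaussianReal 0 (σ ^ 2).toNNReal) P :=
    ⟨(hε l).aemeasurable, hεgauss l⟩
  have hβL2 := hβlaw.memLp_of_gaussianReal (p := 2) ENNReal.ofNat_ne_top
  have hεL2 (l) := (hεlaw l).memLp_of_gaussianReal (p := 2) ENNReal.ofNat_ne_top
  have hyL2 (l) : MemLp (β + θ l + ε l) 2 P := (hβL2.add (hθL2 l)).add (hεL2 l)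
  have hβθ (l) : cov[β, θ l; P] = 0 :=
    (hβind.comp measurable_id ((measurable_pi_apply l).comp measurable_snd)).covariance_eq_zero
      hβL2 (hθL2 l)
  have hβε (l) : cov[β, ε l; P] = 0 :=
    (hεind.comp (measurable_pi_apply l) (measurable_snd.comp measurable_snd)).symm
      |>.covariance_eq_zero hβL2 (hεL2 l)
  have hεθ (l m) : cov[ε l, θ m; P] = 0 :=
    (hεind.comp (measurable_pi_apply l)
      ((measurable_pi_apply m).comp (measurable_fst.comp measurable_snd))).covariance_eq_zero
      (hεL2 l) (hθL2 m)
  have hm : MeasurableSpace.comap (fun ω (i' : Fin n) => c i' ω) inferInstance ≤ ‹_› :=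
    (measurable_pi_lambda _ hc).comap_le
  have hθθ (l m) : cov[θ l, θ m; P]
      = ∑ h, lam h ^ 2 * H h l m * (P {ω | c l ω = h ∧ c m ω = h}).toReal :=
    (covariance_eq_integral_of_condExp_eq_zero hm (hθL2 l) (hθL2 m) (hθcond1 l)
      (hθcond2 l m)).trans (integral_sum_mul_ite_eq _ _ _
        fun h => ((hc l) (measurableSet_singleton h)).inter ((hc m) (measurableSet_singleton h)))
  have hcov (l m) : cov[β + θ l + ε l, β + θ m + ε m; P]
      = τ ^ 2 + ∑ h, lam h ^ 2 * H h l m * (P {ω | c l ω = h ∧ c m ω = h}).toReal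
        + cov[ε l, ε m; P] := by
    rw [covariance_add_add_of_uncorrelated hβL2 (hθL2 l) (hθL2 m) (hεL2 l) (hεL2 m) (hβθ l)
      (hβθ m) (hβε l) (hβε m) (hεθ l m) (hεθ m l), hβlaw.variance_eq_of_gaussianReal,
      Real.coe_toNNReal _ (sq_nonneg τ), hθθ]
  have hεε (l) : cov[ε l, ε l; P] = σ ^ 2 := by
    rw [covariance_self (hε l).aemeasurable, (hεlaw l).variance_eq_of_gaussianReal,
      Real.coe_toNNReal _ (sq_nonneg σ)]
  rw [corr_eq_covariance (hyL2 i) (hyL2 j), hcov, hcov, hcov, hεε, hεε,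
    (hεindep.indepFun hij).covariance_eq_zero (hεL2 i) (hεL2 j)]
  simp only [hHdiag, mul_one, and_self, add_zero, add_rotate (σ ^ 2)]

/-- (Proposition 3, intercept-only case) In the Gaussian model with a global random
intercept and cluster-specific Gaussian spatial random effects and no covariates, for any
two indices `i ≠ j`,
`Corr(y i, y j) = (τ² + ∑ₕ λₕ² (Hₕ)ᵢⱼ P(cᵢ = cⱼ = h))
  / (√(σ² + τ² + ∑ₕ λₕ² P(cᵢ = h)) · √(σ² + τ² + ∑ₕ λₕ² P(cⱼ = h)))`. -/
theorem correlation_global_intercept_local_spatial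
    {Ω : Type*} [MeasurableSpace Ω] (P : Measure Ω) [IsProbabilityMeasure P]
    (n k : ℕ) (hn : 2 ≤ n) (hk : 1 ≤ k)
    -- random cluster labels
    (c : Fin n → Ω → Fin k) (hc : ∀ i, Measurable (c i))
    -- global random intercept β ~ N(μ, τ²)
    (β : Ω → ℝ) (hβ : Measurable β)
    -- Gaussian errors
    (ε : Fin n → Ω → ℝ) (hε : ∀ i, Measurable (ε i))
    -- cluster-specific spatial random effects
    (θ : Fin n → Ω → ℝ) (hθ : ∀ i, Measurable (θ i))
    (μv τ : ℝ) (hτ : 0 < τ) (σ : ℝ) (hσ : 0 < σ)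
    (lam : Fin k → ℝ) (hlam : ∀ h, 0 < lam h)
    (H : Fin k → Matrix (Fin n) (Fin n) ℝ) (hH : ∀ h, (H h).PosSemidef)
    (hHdiag : ∀ h i, H h i i = 1)
    (hβgauss : Measure.map β P = gaussianReal μv (Real.toNNReal (τ ^ 2)))
    -- the ε's are i.i.d. N(0, σ²)
    (hεindep : iIndepFun ε P)
    (hεgauss : ∀ i, Measure.map (ε i) P = gaussianReal 0 (Real.toNNReal (σ ^ 2)))
    -- the θ's are square integrable with the prescribed conditional moments given the labels
    (hθL2 : ∀ i, MemLp (θ i) 2 P)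
    (hθcond1 : ∀ i, P[θ i |
      MeasurableSpace.comap (fun ω (i' : Fin n) => c i' ω) inferInstance] =ᵐ[P] 0)
    (hθcond2 : ∀ i j, P[fun ω => θ i ω * θ j ω |
      MeasurableSpace.comap (fun ω (i' : Fin n) => c i' ω) inferInstance]
      =ᵐ[P] fun ω => ∑ h, (lam h) ^ 2 * H h i j * (if c i ω = h ∧ c j ω = h then (1 : ℝ) else 0))
    -- β is independent of (labels, θ)
    (hβind : IndepFun β (fun ω => ((fun i => c i ω, fun i => θ i ω) :
      (Fin n → Fin k) × (Fin n → ℝ))) P)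
    -- the ε family is independent of (labels, θ, β)
    (hεind : IndepFun (fun ω (i : Fin n) => ε i ω)
      (fun ω => ((fun i => c i ω, fun i => θ i ω, β ω) :
        (Fin n → Fin k) × (Fin n → ℝ) × ℝ)) P)
    -- responses
    (y : Fin n → Ω → ℝ)
    (hy : ∀ i ω, y i ω = β ω + θ i ω + ε i ω)
    (i j : Fin n) (hij : i ≠ j) :
    corr P (y i) (y j)
      = (τ ^ 2 + ∑ h, (lam h) ^ 2 * H h i j * (P {ω | c i ω = h ∧ c j ω = h}).toReal)
        / (Real.sqrt (σ ^ 2 + τ ^ 2 + ∑ h, (lam h) ^ 2 * (P {ω | c i ω = h}).toReal)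
            * Real.sqrt (σ ^ 2 + τ ^ 2 + ∑ h, (lam h) ^ 2 * (P {ω | c j ω = h}).toReal)) :=
  correlation_global_intercept_local_spatial_general P n k c hc β hβ ε hε θ μv τ σ lam H hHdiag
    hβgauss hεindep hεgauss hθL2 hθcond1 hθcond2 hβind hεind y hy i j hij
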